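/- arXiv:1707.08456 — 2 statements merged into one kernel-verified Lean document; each statement's English description precedes it below -/
import Mathlib

section
/- Fix N ≥ 2 and d ≥ 1. For all partitions μ and ν of N, each with at most d parts, the number of partitions α of N−1 with at most d parts such that both μ and ν are obtained from α by adding a single box equals the entry (M_F^d(N))_{μν}; explicitly, this number equals n_μ if μ = ν, equals 1 if μ ≠ ν and μ/ν = □, and equals 0 otherwise. Consequently M_F^d(N) is the Gram matrix (over the integers) of the family of 0/1 incidence vectors recording which partitions of N with at most d parts are obtained from each α by adding a box. -/
/-- `AddBox α μ` means that the Young diagram `μ` is obtained from the Young diagram `α`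
by adding a single box; equivalently, `α` is obtained from `μ` by removing a box:
the diagram of `α` is contained in the diagram of `μ` and `μ` has exactly one more cell. -/
def AddBox (α μ : YoungDiagram) : Prop :=
  α ≤ μ ∧ μ.card = α.card + 1

/-- `MoveBox μ ν` (written `μ/ν = □` in the paper): `μ ≠ ν` and some Young diagram can be
obtained from both `μ` and `ν` by removing a single box, i.e. `μ` is obtained from `ν`
by moving a single box. -/
def MoveBox (μ ν : YoungDiagram) : Prop :=
  μ ≠ ν ∧ ∃ α : YoungDiagram, AddBox α μ ∧ AddBox α ν

/-- `nBox μ` is the number `n_μ` of Young diagrams obtained from `μ` by removing a box. -/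
noncomputable def nBox (μ : YoungDiagram) : ℕ :=
  Nat.card {α : YoungDiagram // AddBox α μ}

/-- Partitions of `N` with at most `d` parts, identified with Young diagrams with `N` boxes
whose first column has height at most `d`. -/
abbrev PartLE (N d : ℕ) : Type :=
  {μ : YoungDiagram // μ.card = N ∧ μ.colLen 0 ≤ d}

instance : DecidableEq YoungDiagram := fun μ ν =>
  decidable_of_iff (μ.cells = ν.cells) (YoungDiagram.ext_iff).symm

theorem cell_lt_card {μ : YoungDiagram} {i j : ℕ} (h : (i, j) ∈ μ.cells) :
    i < μ.card ∧ j < μ.card := by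
  rw [YoungDiagram.mem_cells] at h
  constructor
  · have hsub : Finset.range (i + 1) ×ˢ ({j} : Finset ℕ) ⊆ μ.cells := by
      rintro ⟨a, b⟩ hab
      rw [Finset.mem_product, Finset.mem_range, Finset.mem_singleton] at hab
      rw [YoungDiagram.mem_cells]
      obtain ⟨h1, h2⟩ := hab
      subst h2
      exact μ.up_left_mem (Nat.lt_succ_iff.mp h1) le_rfl h
    have := Finset.card_le_card hsub
    simpa [YoungDiagram.card] using this
  · have hsub : ({i} : Finset ℕ) ×ˢ Finset.range (j + 1) ⊆ μ.cells := by
      rintro ⟨a, b⟩ hab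
      rw [Finset.mem_product, Finset.mem_range, Finset.mem_singleton] at hab
      rw [YoungDiagram.mem_cells]
      obtain ⟨h1, h2⟩ := hab
      subst h1
      exact μ.up_left_mem le_rfl (Nat.lt_succ_iff.mp h2) h
    have := Finset.card_le_card hsub
    simpa [YoungDiagram.card] using this

noncomputable instance (N d : ℕ) : Fintype (PartLE N d) := by
  apply Fintype.ofInjective
    (β := {s : Finset (ℕ × ℕ) // s ∈ (Finset.range N ×ˢ Finset.range N).powerset})
    (f := fun μ => ⟨μ.1.cells, by
      rw [Finset.mem_powerset]
      rintro ⟨i, j⟩ hc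
      have h := cell_lt_card hc
      rw [μ.2.1] at h
      simp only [Finset.mem_product, Finset.mem_range]
      exact h⟩)
  rintro ⟨μ, hμ⟩ ⟨ν, hν⟩ h
  simp only [Subtype.mk.injEq] at h ⊢
  exact YoungDiagram.ext h

open scoped Classical in
/-- The Teleportation Matrix `M_F^d(N)`, indexed by the partitions of `N` with at most
`d` parts: the diagonal entry at `μ` is `n_μ`, the off-diagonal entry at `(μ, ν)` is `1`
if `μ/ν = □` and `0` otherwise.  For `d ≥ N` this is the full matrix `M_F(N)`. -/
noncomputable def MF (N d : ℕ) : Matrix (PartLE N d) (PartLE N d) ℝ :=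
  fun μ ν => if μ = ν then (nBox μ.1 : ℝ) else if MoveBox μ.1 ν.1 then 1 else 0

lemma colLen_mono_diagram {α μ : YoungDiagram} (h : α ≤ μ) (j : ℕ) :
    α.colLen j ≤ μ.colLen j := by
  by_contra h'
  push_neg at h'
  have : (μ.colLen j, j) ∈ α := YoungDiagram.mem_iff_lt_colLen.mpr h'
  have : (μ.colLen j, j) ∈ μ := YoungDiagram.cells_subset_iff.mpr h this
  exact lt_irrefl _ (YoungDiagram.mem_iff_lt_colLen.mp this)

lemma addBox_eq_inter {μ ν α : YoungDiagram} (hμν : μ ≠ ν)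
    (h1 : AddBox α μ) (h2 : AddBox α ν) : α.cells = μ.cells ∩ ν.cells := by
  have hsub : α.cells ⊆ μ.cells ∩ ν.cells :=
    Finset.subset_inter (YoungDiagram.cells_subset_iff.mpr h1.1)
      (YoungDiagram.cells_subset_iff.mpr h2.1)
  have e1 : μ.cells.card = μ.card := rfl
  have e2 : ν.cells.card = ν.card := rfl
  have e3 : α.cells.card = α.card := rfl
  have hc1 := h1.2
  have hc2 := h2.2
  have hlt : (μ.cells ∩ ν.cells).card ≤ α.card := by
    by_contra h'
    push_neg at h'
    have hle : (μ.cells ∩ ν.cells).card ≤ μ.card :=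
      Finset.card_le_card (Finset.inter_subset_left)
    have heq : (μ.cells ∩ ν.cells) = μ.cells := by
      apply Finset.eq_of_subset_of_card_le Finset.inter_subset_left
      omega
    have hsub2 : μ.cells ⊆ ν.cells := by
      rw [← heq]; exact Finset.inter_subset_right
    have : μ.cells = ν.cells := by
      apply Finset.eq_of_subset_of_card_le hsub2
      have : μ.card = ν.card := by omega
      exact le_of_eq this.symm
    exact hμν (YoungDiagram.ext this)
  rw [← e3] at hlt
  exact Finset.eq_of_subset_of_card_le hsub hlt

lemma addBox_unique {μ ν α β : YoungDiagram} (hμν : μ ≠ ν)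
    (h1 : AddBox α μ) (h2 : AddBox α ν) (h3 : AddBox β μ) (h4 : AddBox β ν) :
    α = β := by
  apply YoungDiagram.ext
  rw [addBox_eq_inter hμν h1 h2, addBox_eq_inter hμν h3 h4]

/-- Fix `N ≥ 2` and `d ≥ 1`.  For all partitions `μ`, `ν` of `N` with at most `d` parts,
the number of partitions `α` of `N - 1` with at most `d` parts such that both `μ` and `ν`
are obtained from `α` by adding a single box equals the entry `(M_F^d(N))_{μν}`
(which is `n_μ` if `μ = ν`, is `1` if `μ ≠ ν` and `μ/ν = □`, and is `0` otherwise);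
hence `M_F^d(N)` is a Gram matrix of `0/1` incidence vectors. -/
theorem MF_eq_common_box_count (N d : ℕ) (hN : 2 ≤ N) (hd : 1 ≤ d) (μ ν : PartLE N d) :
    (Nat.card {α : YoungDiagram //
        α.card = N - 1 ∧ α.colLen 0 ≤ d ∧ AddBox α μ.1 ∧ AddBox α ν.1} : ℝ)
      = MF N d μ ν := by
  classical
  have hcard : ∀ α : YoungDiagram, AddBox α μ.1 → α.card = N - 1 := by
    intro α hα
    have := hα.2
    have := μ.2.1
    omega
  have hcol : ∀ α : YoungDiagram, AddBox α μ.1 → α.colLen 0 ≤ d := by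
    intro α hα
    exact (colLen_mono_diagram hα.1 0).trans μ.2.2
  by_cases hμν : μ = ν
  · subst hμν
    have : Nat.card {α : YoungDiagram //
        α.card = N - 1 ∧ α.colLen 0 ≤ d ∧ AddBox α μ.1 ∧ AddBox α μ.1}
        = nBox μ.1 := by
      apply Nat.card_congr
      exact ⟨fun x => ⟨x.1, x.2.2.2.1⟩,
        fun x => ⟨x.1, hcard x.1 x.2, hcol x.1 x.2, x.2, x.2⟩,
        fun x => rfl, fun x => rfl⟩
    rw [this]
    simp [MF]
  · have hne : μ.1 ≠ ν.1 := fun h => hμν (Subtype.ext h)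
    by_cases hmv : MoveBox μ.1 ν.1
    · obtain ⟨-, α₀, h1, h2⟩ := hmv
      have huniq : Nat.card {α : YoungDiagram //
          α.card = N - 1 ∧ α.colLen 0 ≤ d ∧ AddBox α μ.1 ∧ AddBox α ν.1} = 1 := by
        haveI : Unique {α : YoungDiagram //
            α.card = N - 1 ∧ α.colLen 0 ≤ d ∧ AddBox α μ.1 ∧ AddBox α ν.1} :=
          ⟨⟨⟨α₀, hcard α₀ h1, hcol α₀ h1, h1, h2⟩⟩,
            fun x => Subtype.ext (addBox_unique hne x.2.2.2.1 x.2.2.2.2 h1 h2)⟩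
        exact Nat.card_unique
      rw [huniq]
      simp only [MF, hμν, hne, MoveBox, if_false, ne_eq, not_false_iff, true_and]
      rw [if_pos ⟨α₀, h1, h2⟩]
      norm_num
    · have hempty : IsEmpty {α : YoungDiagram //
          α.card = N - 1 ∧ α.colLen 0 ≤ d ∧ AddBox α μ.1 ∧ AddBox α ν.1} := by
        constructor
        intro x
        exact hmv ⟨hne, x.1, x.2.2.2.1, x.2.2.2.2⟩
      rw [Nat.card_of_isEmpty]
      simp [MF, hμν, hmv]
end

section
/- Fix N ≥ 2 and d ≥ 2. The nonnegative matrix M_F^d(N) is irreducible: for every pair of partitions μ, ν of N with at most d parts, there exists a positive integer q such that the (μ, ν) entry of the q-th matrix power (M_F^d(N))^q is strictly positive. -/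
/-!
Moving the last box of the last row to the end of the first row keeps a partition within
`d` parts and lengthens its first row, so every partition in `PartLE N d` is joined by moves
`μ/ν = □` to the one-row partition `(N)`. Moves are positive off-diagonal entries of `M_F^d(N)`,
and for `N ≥ 1` every diagonal entry `n_μ` is positive, so the move graph yields, for every
`μ, ν`, a path of positive length along positive entries, i.e. a positive entry of some power.
-/

open Relation
open scoped Function

namespace Matrix

variable {n R : Type*} [Fintype n] [DecidableEq n] [Semiring R] [PartialOrder R]
  [IsOrderedRing R] [PosMulStrictMono R]

theorem exists_pow_apply_pos_of_transGen {A : Matrix n n R} (hA : ∀ i j, 0 ≤ A i j) {i j : n}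
    (h : TransGen (fun i j => 0 < A i j) i j) : ∃ q, 0 < q ∧ 0 < (A ^ q) i j := by
  induction h with
  | single hij => exact ⟨1, one_pos, by rwa [pow_one]⟩
  | @tail k l _ hkl ih =>
    obtain ⟨q, -, hq⟩ := ih
    refine ⟨q + 1, q.succ_pos, ?_⟩
    rw [pow_succ, mul_apply]
    exact (mul_pos hq hkl).trans_le <| Finset.single_le_sum
      (fun x _ => mul_nonneg (pow_apply_nonneg hA q i x) (hA x l)) (Finset.mem_univ k)

end Matrix

theorem MoveBox.symm {μ ν : YoungDiagram} (h : MoveBox μ ν) : MoveBox ν μ :=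
  let ⟨hne, α, hμ, hν⟩ := h
  ⟨hne.symm, α, hν, hμ⟩

instance : Std.Symm MoveBox := ⟨fun _ _ => MoveBox.symm⟩

namespace YoungDiagram

variable {μ : YoungDiagram}

theorem rowLen_zero_le_card (μ : YoungDiagram) : μ.rowLen 0 ≤ μ.card := by
  rw [rowLen_eq_card]
  exact Finset.card_filter_le _ _

theorem cells_eq_row_zero (h : μ.rowLen 0 = μ.card) : μ.cells = μ.row 0 :=
  (Finset.eq_of_subset_of_card_le (s := μ.row 0) (Finset.filter_subset _ _)
    (by rw [← rowLen_eq_card]; exact h.ge)).symm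

theorem eq_of_rowLen_zero_eq_card {ν : YoungDiagram} (hμ : μ.rowLen 0 = μ.card)
    (hν : ν.rowLen 0 = ν.card) (h : μ.card = ν.card) : μ = ν := by
  ext1
  rw [cells_eq_row_zero hμ, cells_eq_row_zero hν, row_eq_prod, row_eq_prod, hμ, hν, h]

theorem mem_one_zero_of_rowLen_zero_lt_card (h : μ.rowLen 0 < μ.card) : (1, 0) ∈ μ := by
  rw [rowLen_eq_card] at h
  obtain ⟨c, hc, hc0⟩ := Finset.exists_mem_notMem_of_card_lt_card h
  rw [mem_row_iff, not_and] at hc0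
  exact μ.up_left_mem (Nat.one_le_iff_ne_zero.2 (hc0 hc)) (Nat.zero_le c.2) hc

theorem exists_removable_cell {i j : ℕ} (h : (i, j) ∈ μ) :
    ∃ c ∈ μ, i ≤ c.1 ∧ (c.1 + 1, c.2) ∉ μ ∧ (c.1, c.2 + 1) ∉ μ := by
  have hi : i < μ.colLen 0 := mem_iff_lt_colLen.1 (μ.up_left_mem le_rfl (Nat.zero_le j) h)
  set r := μ.colLen 0 - 1
  have hr : (r, 0) ∈ μ := mem_iff_lt_colLen.2 (by omega)
  have hrow : 0 < μ.rowLen r := mem_iff_lt_rowLen.1 hr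
  refine ⟨(r, μ.rowLen r - 1), mem_iff_lt_rowLen.2 (by omega), by omega, ?_, ?_⟩ <;> dsimp only
  · rw [mem_iff_lt_colLen]
    have := μ.colLen_anti 0 (μ.rowLen r - 1) (Nat.zero_le _)
    omega
  · rw [mem_iff_lt_rowLen]
    omega

def eraseCell (μ : YoungDiagram) (c : ℕ × ℕ) (hbelow : (c.1 + 1, c.2) ∉ μ)
    (hright : (c.1, c.2 + 1) ∉ μ) : YoungDiagram where
  cells := μ.cells.erase c
  isLowerSet := by
    intro y x hxy hy
    rw [Finset.mem_coe, Finset.mem_erase] at hy ⊢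
    refine ⟨?_, μ.isLowerSet hxy hy.2⟩
    rintro rfl
    rcases lt_or_eq_of_le hxy.1 with h1 | h1
    · exact hbelow (μ.up_left_mem h1 hxy.2 hy.2)
    · rcases lt_or_eq_of_le hxy.2 with h2 | h2
      · exact hright (μ.up_left_mem h1.le h2 hy.2)
      · exact hy.1 (Prod.ext h1.symm h2.symm)

def addToFirstRow (μ : YoungDiagram) : YoungDiagram where
  cells := insert (0, μ.rowLen 0) μ.cells
  isLowerSet := by
    rintro ⟨i, j⟩ ⟨i', j'⟩ ⟨hi, hj⟩ h
    simp only [Finset.coe_insert, Set.mem_insert_iff, Finset.mem_coe, mem_cells,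
      Prod.mk.injEq] at h ⊢
    rcases h with ⟨rfl, rfl⟩ | h
    · obtain rfl : i' = 0 := Nat.le_zero.1 hi
      rcases lt_or_eq_of_le hj with hj | rfl
      · exact Or.inr (mem_iff_lt_rowLen.2 hj)
      · exact Or.inl ⟨rfl, rfl⟩
    · exact Or.inr (μ.up_left_mem hi hj h)

section eraseCell

variable {c : ℕ × ℕ} {hbelow : (c.1 + 1, c.2) ∉ μ} {hright : (c.1, c.2 + 1) ∉ μ}

theorem mem_eraseCell {x : ℕ × ℕ} : x ∈ μ.eraseCell c hbelow hright ↔ x ≠ c ∧ x ∈ μ := by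
  rw [← mem_cells]
  exact Finset.mem_erase

theorem addBox_eraseCell (hc : c ∈ μ) : AddBox (μ.eraseCell c hbelow hright) μ :=
  ⟨fun _ hx => (mem_eraseCell.1 hx).2, (Finset.card_erase_add_one hc).symm⟩

theorem rowLen_eraseCell {i : ℕ} (hi : c.1 ≠ i) :
    (μ.eraseCell c hbelow hright).rowLen i = μ.rowLen i :=
  eq_of_forall_lt_iff fun j => by
    rw [← mem_iff_lt_rowLen, ← mem_iff_lt_rowLen, mem_eraseCell]
    exact and_iff_right (by rintro rfl; exact hi rfl)

end eraseCell

theorem mem_addToFirstRow {x : ℕ × ℕ} : x ∈ μ.addToFirstRow ↔ x = (0, μ.rowLen 0) ∨ x ∈ μ := by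
  rw [← mem_cells]
  exact Finset.mem_insert

theorem addBox_addToFirstRow (μ : YoungDiagram) : AddBox μ μ.addToFirstRow :=
  ⟨fun _ hx => mem_addToFirstRow.2 (Or.inr hx),
    Finset.card_insert_of_notMem (fun h => (mem_iff_lt_rowLen.1 h).false)⟩

theorem rowLen_zero_addToFirstRow (μ : YoungDiagram) :
    μ.addToFirstRow.rowLen 0 = μ.rowLen 0 + 1 :=
  eq_of_forall_lt_iff fun j => by
    rw [← mem_iff_lt_rowLen, mem_addToFirstRow, mem_iff_lt_rowLen, Prod.mk.injEq,
      Nat.lt_succ_iff_lt_or_eq]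
    tauto

/-- `ν` is obtained by moving the last cell of the last row to the end of the first row. -/
theorem exists_moveBox_rowLen_zero_succ (h : (1, 0) ∈ μ) :
    ∃ ν, MoveBox μ ν ∧ ν.card = μ.card ∧ ν.colLen 0 ≤ μ.colLen 0 ∧
      ν.rowLen 0 = μ.rowLen 0 + 1 := by
  obtain ⟨c, hc, hc1, hbelow, hright⟩ := exists_removable_cell h
  set α := μ.eraseCell c hbelow hright
  have hαμ : AddBox α μ := addBox_eraseCell hc
  have hαν : AddBox α α.addToFirstRow := addBox_addToFirstRow α
  have hrow : α.addToFirstRow.rowLen 0 = μ.rowLen 0 + 1 := by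
    rw [rowLen_zero_addToFirstRow, rowLen_eraseCell (by omega)]
  refine ⟨α.addToFirstRow, ⟨fun he => ?_, α, hαμ, hαν⟩, by rw [hαν.2, hαμ.2], ?_, hrow⟩
  · rw [← he] at hrow
    omega
  · by_contra! hlt
    rcases mem_addToFirstRow.1 (mem_iff_lt_colLen.2 hlt) with he | hmem
    · have := mem_iff_lt_colLen.1 h
      simp only [Prod.mk.injEq] at he
      omega
    · exact (mem_iff_lt_colLen.1 (hαμ.1 hmem)).false

end YoungDiagram

instance (μ : YoungDiagram) : Finite {α : YoungDiagram // AddBox α μ} :=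
  Finite.of_injective (β := μ.cells.powerset)
    (fun α => ⟨α.1.cells, Finset.mem_powerset.2 (YoungDiagram.cells_subset_iff.2 α.2.1)⟩)
    (fun _ _ h => Subtype.ext (YoungDiagram.ext (congrArg Subtype.val h)))

theorem nBox_pos {μ : YoungDiagram} (h : μ.card ≠ 0) : 0 < nBox μ := by
  obtain ⟨⟨i, j⟩, hij⟩ := Finset.card_ne_zero.1 h
  obtain ⟨c, hc, -, hbelow, hright⟩ := YoungDiagram.exists_removable_cell hij
  have : Nonempty {α // AddBox α μ} :=
    ⟨⟨_, YoungDiagram.addBox_eraseCell (hbelow := hbelow) (hright := hright) hc⟩⟩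
  exact Nat.card_pos

namespace PartLE

variable {N d : ℕ}

theorem exists_reflTransGen_rowLen_zero_eq (μ : PartLE N d) :
    ∃ ρ : PartLE N d, ρ.1.rowLen 0 = N ∧ ReflTransGen (MoveBox on Subtype.val) μ ρ := by
  induction hk : N - μ.1.rowLen 0 generalizing μ with
  | zero => exact ⟨μ, by have := μ.1.rowLen_zero_le_card; omega, .refl⟩
  | succ k ih =>
    have hlt : μ.1.rowLen 0 < μ.1.card := by omega
    obtain ⟨ν, hmove, hcard, hcol, hrow⟩ := μ.1.exists_moveBox_rowLen_zero_succ
      (YoungDiagram.mem_one_zero_of_rowLen_zero_lt_card hlt)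
    obtain ⟨ρ, hρ, hνρ⟩ := ih ⟨ν, hcard.trans μ.2.1, hcol.trans μ.2.2⟩ (by simp only; omega)
    exact ⟨ρ, hρ, .head hmove hνρ⟩

theorem reflTransGen_moveBox (μ ν : PartLE N d) : ReflTransGen (MoveBox on Subtype.val) μ ν := by
  obtain ⟨ρ, hρ, hμρ⟩ := exists_reflTransGen_rowLen_zero_eq μ
  obtain ⟨ρ', hρ', hνρ'⟩ := exists_reflTransGen_rowLen_zero_eq ν
  have : ρ = ρ' := Subtype.ext <| YoungDiagram.eq_of_rowLen_zero_eq_card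
    (hρ.trans ρ.2.1.symm) (hρ'.trans ρ'.2.1.symm) (ρ.2.1.trans ρ'.2.1.symm)
  subst this
  exact hμρ.trans (symm_of _ hνρ')

end PartLE

theorem MF_nonneg (N d : ℕ) (μ ν : PartLE N d) : 0 ≤ MF N d μ ν := by
  unfold MF
  split_ifs <;> positivity

theorem MF_apply_self_pos {N d : ℕ} (hN : N ≠ 0) (μ : PartLE N d) : 0 < MF N d μ μ := by
  rw [MF, if_pos rfl]
  exact_mod_cast nBox_pos (μ.2.1.trans_ne hN)

theorem MF_pos_of_moveBox {N d : ℕ} {μ ν : PartLE N d} (h : MoveBox μ.1 ν.1) :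
    0 < MF N d μ ν := by
  rw [MF, if_neg (fun he => h.1 (congrArg Subtype.val he)), if_pos h]
  exact one_pos

theorem MF_irreducible_general (N d : ℕ) (hN : 2 ≤ N) (μ ν : PartLE N d) :
    ∃ q : ℕ, 0 < q ∧ 0 < ((MF N d) ^ q) μ ν := by
  have hpath : ReflTransGen (fun μ ν => 0 < MF N d μ ν) μ ν :=
    ReflTransGen.mono (fun _ _ => MF_pos_of_moveBox) _ _ (PartLE.reflTransGen_moveBox μ ν)
  have htrans : TransGen (fun μ ν => 0 < MF N d μ ν) μ ν := by
    rcases reflTransGen_iff_eq_or_transGen.1 hpath with rfl | h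
    · exact .single (MF_apply_self_pos (by omega) ν)
    · exact h
  exact Matrix.exists_pow_apply_pos_of_transGen (MF_nonneg N d) htrans

/-- Fix `N ≥ 2` and `d ≥ 2`.  The nonnegative matrix `M_F^d(N)` is irreducible: for every pair
of partitions `μ`, `ν` of `N` with at most `d` parts there is a positive integer `q` such that
the `(μ, ν)` entry of `(M_F^d(N))^q` is strictly positive. -/
theorem MF_irreducible (N d : ℕ) (hN : 2 ≤ N) (hd : 2 ≤ d) (μ ν : PartLE N d) :
    ∃ q : ℕ, 0 < q ∧ 0 < ((MF N d) ^ q) μ ν :=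
  MF_irreducible_general N d hN μ ν
end
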